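/- arXiv:math/0411295 — 2 statements merged into one kernel-verified Lean document; each statement's English description precedes it below -/
import Mathlib

section
/- Let t ≥ 3 be an integer and let e₁,…,e_t and n₁,…,n_t be integers all ≥ 1. Define the integer η(e,n) := ∏_{i=1}^{t} C(2e_i+n_i, n_i) − ( ∏_{i=1}^{t} C(e_i+n_i, n_i) − 1 )·( Σ_{i=1}^{t} n_i + 1 ) − 1. Then for every index i₀ ∈ {1,…,t}, replacing n_{i₀} by n_{i₀}+1 (keeping all other arguments fixed) does not decrease η; that is, η is non-decreasing in each variable n_i. -/
/-!
Multiplying `η(e, n') - η(e, n)` by `n i₀ + 1` and using `(m + 1) C(m, k) = C(m + 1, k + 1) (k + 1)`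
turns the claim into
`∏ C(eᵢ + nᵢ, nᵢ) · (e i₀ (∑ n + 2) + n i₀ + 1) ≤ 2 e i₀ ∏ C(2eᵢ + nᵢ, nᵢ) + n i₀ + 1`.
Since `C(2e + n, n) / C(e + n, n) ≥ (n + 2) / 2` for `e ≥ 1`, it suffices that
`2 ^ (t - 1) (∑ n + n i₀ + 3) ≤ ∏ (nᵢ + 2)`, a Bernoulli-type estimate valid for `t ≥ 3` except when
`t = 3` and all `nᵢ = 1`; there the claim is a polynomial inequality in `e - 1` with nonnegative
coefficients.
-/

open Finset

/-- η(e,n) = ∏ᵢ C(2eᵢ+nᵢ, nᵢ) − (∏ᵢ C(eᵢ+nᵢ, nᵢ) − 1)·(Σᵢ nᵢ + 1) − 1, as an integer. -/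
def eta {t : ℕ} (e n : Fin t → ℕ) : ℤ :=
  (∏ i, ((2 * e i + n i).choose (n i) : ℤ))
    - ((∏ i, ((e i + n i).choose (n i) : ℤ)) - 1) * ((∑ i, (n i : ℤ)) + 1) - 1

@[to_additive]
theorem prod_apply_update {ι α M : Type*} [Fintype ι] [DecidableEq ι] [CommMonoid M]
    (g : ι → α → M) (f : ι → α) (i₀ : ι) (a : α) :
    ∏ i, g i (Function.update f i₀ a i) = g i₀ a * ∏ i ∈ univ.erase i₀, g i (f i) := by
  rw [← mul_prod_erase univ _ (mem_univ i₀), Function.update_self]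
  congr 1
  exact prod_congr rfl fun i hi => by rw [Function.update_of_ne (ne_of_mem_erase hi)]

theorem eta_update {t : ℕ} (e n : Fin t → ℕ) (i₀ : Fin t) (a : ℕ) :
    eta e (Function.update n i₀ a) =
      ((2 * e i₀ + a).choose a : ℤ) * ∏ i ∈ univ.erase i₀, ((2 * e i + n i).choose (n i) : ℤ)
        - (((e i₀ + a).choose a : ℤ) * ∏ i ∈ univ.erase i₀, ((e i + n i).choose (n i) : ℤ) - 1)
          * ((a : ℤ) + ∑ i ∈ univ.erase i₀, (n i : ℤ) + 1) - 1 := by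
  unfold eta
  rw [prod_apply_update (fun i m => ((2 * e i + m).choose m : ℤ)),
    prod_apply_update (fun i m => ((e i + m).choose m : ℤ)),
    sum_apply_update (fun _ (m : ℕ) => (m : ℤ))]

theorem succ_mul_eta_update_succ_sub {t : ℕ} (e n : Fin t → ℕ) (i₀ : Fin t) :
    ((n i₀ : ℤ) + 1) * (eta e (Function.update n i₀ (n i₀ + 1)) - eta e n)
      = 2 * e i₀ * ∏ i, ((2 * e i + n i).choose (n i) : ℤ) + (n i₀ + 1)
        - (∏ i, ((e i + n i).choose (n i) : ℤ)) * (e i₀ * (∑ i, (n i : ℤ) + 2) + n i₀ + 1) := by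
  have h₀ := eta_update e n i₀ (n i₀)
  rw [Function.update_eq_self] at h₀
  rw [h₀, eta_update, ← mul_prod_erase univ _ (mem_univ i₀),
    ← mul_prod_erase univ _ (mem_univ i₀), ← add_sum_erase univ _ (mem_univ i₀)]
  have hA := Nat.add_one_mul_choose_eq (2 * e i₀ + n i₀) (n i₀)
  have hB := Nat.add_one_mul_choose_eq (e i₀ + n i₀) (n i₀)
  zify at hA hB
  push_cast
  linear_combination -(∏ i ∈ univ.erase i₀, ((2 * e i + n i).choose (n i) : ℤ)) * hA
    + (∏ i ∈ univ.erase i₀, ((e i + n i).choose (n i) : ℤ))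
      * (n i₀ + ∑ i ∈ univ.erase i₀, (n i : ℤ) + 2) * hB

theorem add_two_mul_choose_le (e n : ℕ) (he : 1 ≤ e) :
    (n + 2) * (e + n).choose n ≤ 2 * (2 * e + n).choose n := by
  induction n with
  | zero => simp
  | succ n ih =>
    have hA := Nat.add_one_mul_choose_eq (2 * e + n) n
    have hB := Nat.add_one_mul_choose_eq (e + n) n
    have hpoly : (n + 3) * (e + n + 1) ≤ (n + 2) * (2 * e + n + 1) := by nlinarith
    refine Nat.le_of_mul_le_mul_right ?_ n.succ_pos
    calc (n + 1 + 2) * (e + (n + 1)).choose (n + 1) * (n + 1)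
        = (n + 3) * (e + n + 1) * (e + n).choose n := by rw [← add_assoc, mul_assoc, ← hB]; ring
      _ ≤ (n + 2) * (2 * e + n + 1) * (e + n).choose n := Nat.mul_le_mul_right _ hpoly
      _ = (2 * e + n + 1) * ((n + 2) * (e + n).choose n) := by ring
      _ ≤ (2 * e + n + 1) * (2 * (2 * e + n).choose n) := Nat.mul_le_mul_left _ ih
      _ = 2 * (2 * e + (n + 1)).choose (n + 1) * (n + 1) := by
        rw [← add_assoc, mul_assoc, ← hA]; ring

theorem prod_add_two_mul_prod_choose_le {ι : Type*} (s : Finset ι) (e n : ι → ℕ)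
    (he : ∀ i ∈ s, 1 ≤ e i) :
    (∏ i ∈ s, (n i + 2)) * ∏ i ∈ s, (e i + n i).choose (n i)
      ≤ 2 ^ #s * ∏ i ∈ s, (2 * e i + n i).choose (n i) := by
  rw [← prod_mul_distrib, ← prod_const, ← prod_mul_distrib]
  exact prod_le_prod' fun i hi => add_two_mul_choose_le (e i) (n i) (he i hi)

theorem pow_card_mul_add_sum_le {ι : Type*} (c : ℕ) (s : Finset ι) (u : ι → ℕ) :
    c ^ #s * (c + ∑ i ∈ s, u i) ≤ c * ∏ i ∈ s, (c + u i) := by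
  classical
  induction s using Finset.induction_on with
  | empty => simp
  | insert a s ha ih =>
    rw [card_insert_of_notMem ha, sum_insert ha, prod_insert ha]
    calc c ^ (#s + 1) * (c + (u a + ∑ i ∈ s, u i))
        ≤ (c + u a) * (c ^ #s * (c + ∑ i ∈ s, u i)) := by
          rw [pow_succ]; nlinarith [Nat.zero_le (c ^ #s * u a * ∑ i ∈ s, u i)]
      _ ≤ (c + u a) * (c * ∏ i ∈ s, (c + u i)) := Nat.mul_le_mul_left _ ih
      _ = c * ((c + u a) * ∏ i ∈ s, (c + u i)) := by ring

theorem three_mul_two_pow_le (t U : ℕ) (ht : 4 ≤ t) :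
    3 * 2 ^ t * (2 * U + t + 4) ≤ 2 * 3 ^ t * (U + 3) := by
  induction t, ht using Nat.le_induction with
  | base => norm_num; omega
  | succ t _ ih =>
    have h23 : 2 ^ t ≤ 3 ^ t := Nat.pow_le_pow_left (by norm_num) t
    calc 3 * 2 ^ (t + 1) * (2 * U + (t + 1) + 4)
        = 2 * (3 * 2 ^ t * (2 * U + t + 4)) + 6 * 2 ^ t := by ring
      _ ≤ 2 * (2 * 3 ^ t * (U + 3)) + 6 * 3 ^ t := by gcongr
      _ ≤ 2 * 3 ^ (t + 1) * (U + 3) := by ring_nf; omega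

theorem two_pow_card_mul_le_two_mul_prod {ι : Type*} [Fintype ι] (hι : 3 ≤ Fintype.card ι)
    (n : ι → ℕ) (hn : ∀ i, 1 ≤ n i) (i₀ : ι) (h : 4 ≤ Fintype.card ι ∨ ∃ j, 2 ≤ n j) :
    2 ^ Fintype.card ι * (∑ i, n i + n i₀ + 3) ≤ 2 * ∏ i, (n i + 2) := by
  have hsum : ∑ i, n i = ∑ i, (n i - 1) + Fintype.card ι := by
    rw [← card_univ, card_eq_sum_ones, ← sum_add_distrib]
    exact sum_congr rfl fun i _ => by have := hn i; omega
  have hle (j : ι) : n j ≤ ∑ i, (n i - 1) + 1 := by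
    have := single_le_sum (f := fun i => n i - 1) (fun i _ => Nat.zero_le _) (mem_univ j)
    omega
  have hbern := pow_card_mul_add_sum_le 3 univ (fun i => n i - 1)
  rw [card_univ, prod_congr rfl fun i _ => show 3 + (n i - 1) = n i + 2 by have := hn i; omega]
    at hbern
  generalize ∑ i, (n i - 1) = U at *
  have harith : 3 * 2 ^ Fintype.card ι * (2 * U + Fintype.card ι + 4)
      ≤ 2 * 3 ^ Fintype.card ι * (U + 3) := by
    rcases Nat.lt_or_ge (Fintype.card ι) 4 with h3 | h4
    · obtain ⟨j, hj⟩ := h.resolve_left (by omega)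
      rw [show Fintype.card ι = 3 by omega]
      have := hle j; omega
    · exact three_mul_two_pow_le _ U h4
  refine Nat.le_of_mul_le_mul_left ?_ (show 0 < 3 by norm_num)
  calc 3 * (2 ^ Fintype.card ι * (∑ i, n i + n i₀ + 3))
      ≤ 3 * 2 ^ Fintype.card ι * (2 * U + Fintype.card ι + 4) := by
        rw [mul_assoc]
        exact Nat.mul_le_mul_left _ (Nat.mul_le_mul_left _ (by have := hle i₀; omega))
    _ ≤ 2 * (3 ^ Fintype.card ι * (3 + U)) := by linarith
    _ ≤ 3 * (2 * ∏ i, (n i + 2)) := by linarith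

theorem prod_choose_mul_le_two_mul_prod_choose {t : ℕ} (ht : 3 ≤ t) (e n : Fin t → ℕ)
    (he : ∀ i, 1 ≤ e i) (hn : ∀ i, 1 ≤ n i) (i₀ : Fin t) :
    (∏ i, (e i + n i).choose (n i)) * (∑ i, n i + n i₀ + 3)
      ≤ 2 * ∏ i, (2 * e i + n i).choose (n i) + (n i₀ + 1) := by
  by_cases h : 4 ≤ t ∨ ∃ j, 2 ≤ n j
  · have hchoose := prod_add_two_mul_prod_choose_le univ e n fun i _ => he i
    have hcount := two_pow_card_mul_le_two_mul_prod (by simpa) n hn i₀ (by simpa)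
    simp only [card_univ, Fintype.card_fin] at hchoose hcount
    refine le_add_right (Nat.le_of_mul_le_mul_left ?_ (pow_pos two_pos t))
    calc 2 ^ t * ((∏ i, (e i + n i).choose (n i)) * (∑ i, n i + n i₀ + 3))
        = (∏ i, (e i + n i).choose (n i)) * (2 ^ t * (∑ i, n i + n i₀ + 3)) := by ring
      _ ≤ (∏ i, (e i + n i).choose (n i)) * (2 * ∏ i, (n i + 2)) := Nat.mul_le_mul_left _ hcount
      _ = 2 * ((∏ i, (n i + 2)) * ∏ i, (e i + n i).choose (n i)) := by ring
      _ ≤ 2 * (2 ^ t * ∏ i, (2 * e i + n i).choose (n i)) := Nat.mul_le_mul_left _ hchoose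
      _ = 2 ^ t * (2 * ∏ i, (2 * e i + n i).choose (n i)) := by ring
  -- `t = 3`, `n = 1` is the equality case `e = 1` of the bound, so the slack `n i₀ + 1` is needed.
  · rw [not_or, not_le, not_exists] at h
    obtain rfl : t = 3 := by omega
    obtain rfl : n = fun _ => 1 := funext fun j => by have := hn j; have := h.2 j; omega
    obtain ⟨x, hx⟩ := Nat.exists_eq_add_of_le (he 0)
    obtain ⟨y, hy⟩ := Nat.exists_eq_add_of_le (he 1)
    obtain ⟨z, hz⟩ := Nat.exists_eq_add_of_le (he 2)
    simp only [Fin.prod_univ_three, Fin.sum_univ_three, Nat.choose_one_right, hx, hy, hz]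
    ring_nf
    omega

theorem stmt_16 (t : ℕ) (ht : 3 ≤ t) (e n : Fin t → ℕ)
    (he : ∀ i, 1 ≤ e i) (hn : ∀ i, 1 ≤ n i) (i₀ : Fin t) :
    eta e n ≤ eta e (Function.update n i₀ (n i₀ + 1)) := by
  have hbound : (∏ i, (e i + n i).choose (n i) : ℤ) * (∑ i, (n i : ℤ) + n i₀ + 3)
      ≤ 2 * ∏ i, ((2 * e i + n i).choose (n i) : ℤ) + (n i₀ + 1) := by
    exact_mod_cast prod_choose_mul_le_two_mul_prod_choose ht e n he hn i₀
  have hprod : (1 : ℤ) ≤ ∏ i, ((e i + n i).choose (n i) : ℤ) := by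
    exact_mod_cast Nat.one_le_iff_ne_zero.2 (prod_ne_zero_iff.2 fun i _ =>
      (Nat.choose_pos (Nat.le_add_left _ _)).ne')
  have he₀ : (1 : ℤ) ≤ e i₀ := by exact_mod_cast he i₀
  have hdiff := succ_mul_eta_update_succ_sub e n i₀
  refine sub_nonneg.1 ((mul_nonneg_iff_of_pos_left (by positivity : (0 : ℤ) < n i₀ + 1)).1 ?_)
  rw [hdiff]
  -- the goal minus `e i₀ * hbound` is `(e i₀ - 1) * (∏ C(eᵢ + nᵢ, nᵢ) - 1) * (n i₀ + 1)`
  nlinarith [mul_nonneg (mul_nonneg (sub_nonneg.2 he₀) (sub_nonneg.2 hprod))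
    (by positivity : (0 : ℤ) ≤ n i₀ + 1)]
end

section
/- Define, for integers d₁, d₂, e₁, e₂, n₁, n₂ with d_i ≥ 2e_i ≥ 0 and n_i ≥ 1, the integer φ(d₁,d₂,e₁,e₂,n₁,n₂) := C(d₁+n₁, n₁)·C(d₂+n₂, n₂) − C(d₁−2e₁+n₁, n₁)·C(d₂−2e₂+n₂, n₂) − (C(e₁+n₁, n₁)·C(e₂+n₂, n₂) − 1)·(n₁+n₂+1). Then for all e₁, e₂ ≥ 2, n₁, n₂ ≥ 2 and d₁ ≥ 2e₁, d₂ ≥ 2e₂, one has φ(d₁,d₂,e₁,e₂,n₁,n₂) ≥ 0. -/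
/-- Ratio lemma: for e ≥ 2, n ≥ 2, (n+3)(n+4)·C(e+n,n) ≤ 12·C(2e+n,n). -/
lemma ratio_lemma (e : ℕ) (he : 2 ≤ e) :
    ∀ n, 2 ≤ n → (n + 3) * (n + 4) * ((e + n).choose n) ≤ 12 * ((2 * e + n).choose n) := by
  intro n hn
  induction n, hn using Nat.le_induction with
  | base =>
    have h1 : (e + 2).choose 2 * 2 = (e + 2) * (e + 1) := by
      have h := Nat.add_one_mul_choose_eq (e + 1) 1
      simp only [Nat.succ_eq_add_one, Nat.choose_one_right, show e + 1 + 1 = e + 2 from rfl, show 1 + 1 = 2 from rfl] at h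
      omega
    have h2 : (2 * e + 2).choose 2 * 2 = (2 * e + 2) * (2 * e + 1) := by
      have h := Nat.add_one_mul_choose_eq (2 * e + 1) 1
      simp only [Nat.succ_eq_add_one, Nat.choose_one_right, show 2 * e + 1 + 1 = 2 * e + 2 from rfl, show 1 + 1 = 2 from rfl] at h
      omega
    nlinarith [h1, h2]
  | succ n hn ih =>
    -- multiply goal by (n+1) and use succ_mul_choose_eq
    have h1 : (e + (n + 1)).choose (n + 1) * (n + 1) = (e + n + 1) * ((e + n).choose n) := by
      have h := Nat.add_one_mul_choose_eq (e + n) n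
      rw [show e + (n + 1) = e + n + 1 from by omega]
      omega
    have h2 : (2 * e + (n + 1)).choose (n + 1) * (n + 1) = (2 * e + n + 1) * ((2 * e + n).choose n) := by
      have h := Nat.add_one_mul_choose_eq (2 * e + n) n
      rw [show 2 * e + (n + 1) = 2 * e + n + 1 from by omega]
      omega
    have key : (n + 1 + 3) * (n + 1 + 4) * (e + n + 1) * ((e + n).choose n)
        ≤ 12 * ((2 * e + n + 1) * ((2 * e + n).choose n)) := by
      have h3 : (n + 4) * (n + 5) * (e + n + 1) * ((e + n).choose n)
          ≤ (2 * e + n + 1) * ((n + 3) * (n + 4) * ((e + n).choose n)) := by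
        have hpoly : (n + 4) * (n + 5) * (e + n + 1) ≤ (2 * e + n + 1) * ((n + 3) * (n + 4)) := by
          have hb : (n + 5) * (e + n + 1) ≤ (2 * e + n + 1) * (n + 3) := by
            nlinarith [Nat.mul_le_mul he (le_refl n)]
          calc (n + 4) * (n + 5) * (e + n + 1) = (n + 4) * ((n + 5) * (e + n + 1)) := by ring
            _ ≤ (n + 4) * ((2 * e + n + 1) * (n + 3)) := Nat.mul_le_mul le_rfl hb
            _ = (2 * e + n + 1) * ((n + 3) * (n + 4)) := by ring
        calc (n + 4) * (n + 5) * (e + n + 1) * ((e + n).choose n)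
            ≤ (2 * e + n + 1) * ((n + 3) * (n + 4)) * ((e + n).choose n) :=
              Nat.mul_le_mul_right _ hpoly
          _ = (2 * e + n + 1) * ((n + 3) * (n + 4) * ((e + n).choose n)) := by ring
      calc (n + 1 + 3) * (n + 1 + 4) * (e + n + 1) * ((e + n).choose n)
          = (n + 4) * (n + 5) * (e + n + 1) * ((e + n).choose n) := by ring
        _ ≤ (2 * e + n + 1) * ((n + 3) * (n + 4) * ((e + n).choose n)) := h3
        _ ≤ (2 * e + n + 1) * (12 * ((2 * e + n).choose n)) := Nat.mul_le_mul_left _ ih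
        _ = 12 * ((2 * e + n + 1) * ((2 * e + n).choose n)) := by ring
    have goal_mul : (n + 1 + 3) * (n + 1 + 4) * ((e + (n + 1)).choose (n + 1)) * (n + 1)
        ≤ 12 * ((2 * e + (n + 1)).choose (n + 1)) * (n + 1) := by
      calc (n + 1 + 3) * (n + 1 + 4) * ((e + (n + 1)).choose (n + 1)) * (n + 1)
          = (n + 1 + 3) * (n + 1 + 4) * ((e + (n + 1)).choose (n + 1) * (n + 1)) := by ring
        _ = (n + 1 + 3) * (n + 1 + 4) * ((e + n + 1) * ((e + n).choose n)) := by rw [h1]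
        _ = (n + 1 + 3) * (n + 1 + 4) * (e + n + 1) * ((e + n).choose n) := by ring
        _ ≤ 12 * ((2 * e + n + 1) * ((2 * e + n).choose n)) := key
        _ = 12 * ((2 * e + (n + 1)).choose (n + 1) * (n + 1)) := by rw [h2]
        _ = 12 * ((2 * e + (n + 1)).choose (n + 1)) * (n + 1) := by ring
    exact Nat.le_of_mul_le_mul_right goal_mul (by omega)

/-- Monotonicity: the quantity C(2e+k+n,n)·X − C(k+n,n)·Y (with Y ≤ X) is minimized at k = 0,
    where it equals C(2e+n,n)·X − Y.  Stated with n = m+1. -/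
lemma mono_lemma (e m X Y : ℕ) (hXY : Y ≤ X) :
    ∀ k, ((2 * e + (m + 1)).choose (m + 1) : ℤ) * X - (Y : ℤ)
      ≤ ((2 * e + k + (m + 1)).choose (m + 1) : ℤ) * X - ((k + (m + 1)).choose (m + 1) : ℤ) * Y := by
  intro k
  induction k with
  | zero => simp
  | succ k ih =>
    have hb1 : (2 * e + (k + 1) + (m + 1)).choose (m + 1)
        = (2 * e + k + (m + 1)).choose m + (2 * e + k + (m + 1)).choose (m + 1) := by
      have h : 2 * e + (k + 1) + (m + 1) = (2 * e + k + (m + 1)) + 1 := by omega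
      rw [h, Nat.choose_succ_succ]
    have hb2 : ((k + 1) + (m + 1)).choose (m + 1)
        = (k + (m + 1)).choose m + (k + (m + 1)).choose (m + 1) := by
      have h : (k + 1) + (m + 1) = (k + (m + 1)) + 1 := by omega
      rw [h, Nat.choose_succ_succ]
    have hle : (k + (m + 1)).choose m ≤ (2 * e + k + (m + 1)).choose m :=
      Nat.choose_le_choose m (by omega)
    have hle2 : (k + (m + 1)).choose (m + 1) ≤ (2 * e + k + (m + 1)).choose (m + 1) :=
      Nat.choose_le_choose (m + 1) (by omega)
    have extra : ((k + (m + 1)).choose m : ℤ) * Y ≤ ((2 * e + k + (m + 1)).choose m : ℤ) * X := by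
      have hc1 : ((k + (m + 1)).choose m : ℤ) ≤ ((2 * e + k + (m + 1)).choose m : ℤ) := by
        exact_mod_cast hle
      have hc2 : (Y : ℤ) ≤ (X : ℤ) := by exact_mod_cast hXY
      exact mul_le_mul hc1 hc2 (by positivity) (by positivity)
    rw [hb1, hb2]
    push_cast
    linarith

/-- The polynomial inequality (n₁+3)(n₁+4)(n₂+3)(n₂+4) ≥ 144(n₁+n₂+1) for n₁,n₂ ≥ 2. -/
lemma poly_lemma (n₁ n₂ : ℤ) (h1 : 2 ≤ n₁) (h2 : 2 ≤ n₂) :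
    144 * (n₁ + n₂ + 1) ≤ (n₁ + 3) * (n₁ + 4) * ((n₂ + 3) * (n₂ + 4)) := by
  nlinarith [mul_nonneg (by linarith : (0:ℤ) ≤ n₁ - 2) (by linarith : (0:ℤ) ≤ n₂ - 2),
    mul_nonneg (mul_nonneg (by linarith : (0:ℤ) ≤ n₁ - 2) (by linarith : (0:ℤ) ≤ n₂ - 2)) (by linarith : (0:ℤ) ≤ n₁ + n₂),
    sq_nonneg (n₁ - 2), sq_nonneg (n₂ - 2), sq_nonneg (n₁ + n₂ - 4)]

/-- φ(d₁,d₂,e₁,e₂,n₁,n₂) = C(d₁+n₁,n₁)C(d₂+n₂,n₂) − C(d₁−2e₁+n₁,n₁)C(d₂−2e₂+n₂,n₂)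
    − (C(e₁+n₁,n₁)C(e₂+n₂,n₂) − 1)(n₁+n₂+1), as an integer. -/
def phi (d₁ d₂ e₁ e₂ n₁ n₂ : ℕ) : ℤ :=
  ((d₁ + n₁).choose n₁ : ℤ) * ((d₂ + n₂).choose n₂ : ℤ)
    - ((d₁ - 2 * e₁ + n₁).choose n₁ : ℤ) * ((d₂ - 2 * e₂ + n₂).choose n₂ : ℤ)
    - (((e₁ + n₁).choose n₁ : ℤ) * ((e₂ + n₂).choose n₂ : ℤ) - 1) * ((n₁ : ℤ) + n₂ + 1)

theorem stmt_17 (d₁ d₂ e₁ e₂ n₁ n₂ : ℕ) (he₁ : 2 ≤ e₁) (he₂ : 2 ≤ e₂)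
    (hn₁ : 2 ≤ n₁) (hn₂ : 2 ≤ n₂) (hd₁ : 2 * e₁ ≤ d₁) (hd₂ : 2 * e₂ ≤ d₂) :
    0 ≤ phi d₁ d₂ e₁ e₂ n₁ n₂ := by
  obtain ⟨m₁, rfl⟩ : ∃ m, n₁ = m + 1 := ⟨n₁ - 1, by omega⟩
  obtain ⟨m₂, rfl⟩ : ∃ m, n₂ = m + 1 := ⟨n₂ - 1, by omega⟩
  set n₁ := m₁ + 1
  set n₂ := m₂ + 1
  -- abbreviations
  set A₂ := (d₂ + n₂).choose n₂ with hA₂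
  set B₂ := (d₂ - 2 * e₂ + n₂).choose n₂ with hB₂
  set P₁ := (2 * e₁ + n₁).choose n₁ with hP₁
  set P₂ := (2 * e₂ + n₂).choose n₂ with hP₂
  set E₁ := (e₁ + n₁).choose n₁ with hE₁
  set E₂ := (e₂ + n₂).choose n₂ with hE₂
  have hBA : B₂ ≤ A₂ := Nat.choose_le_choose n₂ (by omega)
  -- step 1: reduce d₁ to 2e₁
  have step1 : (P₁ : ℤ) * A₂ - (B₂ : ℤ)
      ≤ ((d₁ + n₁).choose n₁ : ℤ) * A₂ - ((d₁ - 2 * e₁ + n₁).choose n₁ : ℤ) * B₂ := by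
    have := mono_lemma e₁ m₁ A₂ B₂ hBA (d₁ - 2 * e₁)
    have h1 : 2 * e₁ + (d₁ - 2 * e₁) + (m₁ + 1) = d₁ + n₁ := by omega
    have h2 : (d₁ - 2 * e₁) + (m₁ + 1) = d₁ - 2 * e₁ + n₁ := by omega
    rw [h1, h2] at this
    exact this
  -- step 2: reduce d₂ to 2e₂
  have step2 : (P₂ : ℤ) * P₁ - 1
      ≤ (A₂ : ℤ) * P₁ - (B₂ : ℤ) * 1 := by
    have hP1pos : 1 ≤ P₁ := Nat.choose_pos (by omega)
    have := mono_lemma e₂ m₂ P₁ 1 hP1pos (d₂ - 2 * e₂)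
    have h1 : 2 * e₂ + (d₂ - 2 * e₂) + (m₂ + 1) = d₂ + n₂ := by omega
    have h2 : (d₂ - 2 * e₂) + (m₂ + 1) = d₂ - 2 * e₂ + n₂ := by omega
    rw [h1, h2] at this
    simpa using this
  -- step 3: ratio bounds
  have r₁ : ((n₁ : ℤ) + 3) * ((n₁ : ℤ) + 4) * E₁ ≤ 12 * P₁ := by
    exact_mod_cast ratio_lemma e₁ he₁ n₁ hn₁
  have r₂ : ((n₂ : ℤ) + 3) * ((n₂ : ℤ) + 4) * E₂ ≤ 12 * P₂ := by
    exact_mod_cast ratio_lemma e₂ he₂ n₂ hn₂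
  have hE₁pos : (1 : ℤ) ≤ E₁ := by exact_mod_cast Nat.choose_pos (by omega : n₁ ≤ e₁ + n₁)
  have hE₂pos : (1 : ℤ) ≤ E₂ := by exact_mod_cast Nat.choose_pos (by omega : n₂ ≤ e₂ + n₂)
  have hpoly : 144 * ((n₁ : ℤ) + n₂ + 1) ≤ ((n₁ : ℤ) + 3) * ((n₁ : ℤ) + 4) * (((n₂ : ℤ) + 3) * ((n₂ : ℤ) + 4)) :=
    poly_lemma _ _ (by exact_mod_cast hn₁) (by exact_mod_cast hn₂)
  -- combine: 144·P₁·P₂ ≥ (n₁+3)(n₁+4)(n₂+3)(n₂+4)·E₁·E₂ ≥ 144(n₁+n₂+1)·E₁·E₂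
  have key : ((n₁ : ℤ) + n₂ + 1) * ((E₁ : ℤ) * E₂) ≤ (P₁ : ℤ) * P₂ := by
    have h144 : 144 * (((n₁ : ℤ) + n₂ + 1) * ((E₁ : ℤ) * E₂)) ≤ 144 * ((P₁ : ℤ) * P₂) := by
      calc 144 * (((n₁ : ℤ) + n₂ + 1) * ((E₁ : ℤ) * E₂))
          = (144 * ((n₁ : ℤ) + n₂ + 1)) * ((E₁ : ℤ) * E₂) := by ring
        _ ≤ (((n₁ : ℤ) + 3) * ((n₁ : ℤ) + 4) * (((n₂ : ℤ) + 3) * ((n₂ : ℤ) + 4))) * ((E₁ : ℤ) * E₂) := by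
            apply mul_le_mul_of_nonneg_right hpoly
            positivity
        _ = (((n₁ : ℤ) + 3) * ((n₁ : ℤ) + 4) * E₁) * ((((n₂ : ℤ) + 3) * ((n₂ : ℤ) + 4)) * E₂) := by ring
        _ ≤ (12 * P₁) * (12 * P₂) := by
            apply mul_le_mul r₁ r₂ (by positivity) (by positivity)
        _ = 144 * ((P₁ : ℤ) * P₂) := by ring
    linarith
  -- finish
  unfold phi
  have hn12 : (1 : ℤ) ≤ (n₁ : ℤ) + n₂ + 1 := by
    have h1 : (0 : ℤ) ≤ (n₁ : ℤ) := by positivity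
    have h2 : (0 : ℤ) ≤ (n₂ : ℤ) := by positivity
    linarith
  linarith [step1, step2, key, hn12]
end
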